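/- In the planar code lattice of arbitrary size, every star and every plaquette share an even number of edges: for every vertex v and every face f of the lattice, the cardinality of s(v) ∩ p(f) is 0 or 2. Consequently every star operator X_{s(v)} commutes with every plaquette operator Z_{p(f)}. -/

import Mathlib

noncomputable section

/-- Flip the bits of a string `s : ι → Bool` at the positions in `A`. -/
def flipSet {ι : Type*} [DecidableEq ι] (A : Finset ι) (s : ι → Bool) : ι → Bool :=
  fun i => if i ∈ A then !(s i) else s i

/-- The Pauli-type operator `X_A = ⊗_{i ∈ A} σ_x` on the multi-qubit Hilbert space
`EuclideanSpace ℂ (ι → Bool)`: it permutes the standard basis vectors by flipping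
the bits in `A`, i.e. `X_A e_s = e_{s ⊕ χ_A}`. -/
def XOp {ι : Type*} [Fintype ι] [DecidableEq ι] (A : Finset ι) :
    EuclideanSpace ℂ (ι → Bool) →ₗ[ℂ] EuclideanSpace ℂ (ι → Bool) where
  toFun f := WithLp.toLp 2 (fun s => f (flipSet A s))
  map_add' _ _ := rfl
  map_smul' _ _ := rfl

/-- The Pauli-type operator `Z_B = ⊗_{i ∈ B} σ_z` on the multi-qubit Hilbert space:
it acts diagonally by `Z_B e_s = (−1)^{|{i ∈ B : s i = true}|} e_s`. -/
def ZOp {ι : Type*} [Fintype ι] [DecidableEq ι] (B : Finset ι) :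
    EuclideanSpace ℂ (ι → Bool) →ₗ[ℂ] EuclideanSpace ℂ (ι → Bool) where
  toFun f := WithLp.toLp 2 (fun s => (-1 : ℂ) ^ (B.filter (fun i => s i = true)).card * f s)
  map_add' f g := by
    ext s
    simp [mul_add]
  map_smul' c f := by
    ext s
    simp [Pi.smul_apply, smul_eq_mul]
    ring

/-- The standard (computational) basis vector `e_s` of the multi-qubit space. -/
def basisVec {ι : Type*} [Fintype ι] [DecidableEq ι] (s : ι → Bool) :
    EuclideanSpace ℂ (ι → Bool) :=
  EuclideanSpace.single s 1

/-- The edges of the planar code lattice with `n` columns and `m` rows of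
vertices.  `horiz i j` is the horizontal edge joining vertices `(i, j)` and
`(i+1, j)`; `vert i j` (for `j : Fin (m+1)`) is the vertical edge in column `i`
lying between vertex rows `j-1` and `j` — so `vert i 0` is the dangling edge
below the bottom row and `vert i m` the dangling edge above the top row
(rough top and bottom boundaries, smooth left and right boundaries). -/
inductive PCEdge (n m : ℕ) : Type where
  | horiz : Fin (n - 1) → Fin m → PCEdge n m
  | vert : Fin n → Fin (m + 1) → PCEdge n m
  deriving DecidableEq, Fintype

/-- Whether an edge belongs to the star `s(v)` of the vertex `v = (i, j)`:
the set of edges incident to `v`. -/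
def inStar {n m : ℕ} (v : Fin n × Fin m) : PCEdge n m → Bool
  | .horiz i j => decide (j = v.2) && (decide (i.val = v.1.val) || decide (i.val + 1 = v.1.val))
  | .vert i j => decide (i = v.1) && (decide (j.val = v.2.val) || decide (j.val = v.2.val + 1))

/-- The star `s(v)` of a vertex `v`, as a finite set of edges. -/
def star {n m : ℕ} (v : Fin n × Fin m) : Finset (PCEdge n m) :=
  Finset.univ.filter (fun e => inStar v e = true)

/-- Whether an edge belongs to the plaquette `p(f)` of the unit square face
`f = (i, j)` (the square with corners `(i, j)`, `(i+1, j)`, `(i, j+1)`,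
`(i+1, j+1)`): its four boundary edges. -/
def inPlaquette {n m : ℕ} (f : Fin (n - 1) × Fin (m - 1)) : PCEdge n m → Bool
  | .horiz i j => decide (i.val = f.1.val) &&
      (decide (j.val = f.2.val) || decide (j.val = f.2.val + 1))
  | .vert i j => decide (j.val = f.2.val + 1) &&
      (decide (i.val = f.1.val) || decide (i.val = f.1.val + 1))

/-- The plaquette `p(f)` of a face `f`, as a finite set of edges. -/
def plaquette {n m : ℕ} (f : Fin (n - 1) × Fin (m - 1)) : Finset (PCEdge n m) :=
  Finset.univ.filter (fun e => inPlaquette f e = true)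

/-! Conjugating `Z_B` by `X_A` multiplies it by `(-1)^{|A ∩ B|}`, so the two commute as soon as
`|A ∩ B|` is even. A star `s(v)` meets a plaquette `p(f)` only when `v` is a corner of `f`, and
then in exactly two edges: the horizontal and the vertical side of `f` through `v`. -/

open Finset

section Pauli

variable {ι R : Type*} [CommRing R]

lemma neg_one_pow_card_filter (B : Finset ι) (p : ι → Prop) [DecidablePred p] :
    (-1 : R) ^ #{i ∈ B | p i} = ∏ i ∈ B, if p i then -1 else 1 := by
  rw [prod_ite, prod_const, prod_const_one, mul_one]

variable [DecidableEq ι]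

lemma neg_one_pow_card_filter_flipSet (A B : Finset ι) (s : ι → Bool) :
    (-1 : R) ^ #{i ∈ B | flipSet A s i = true} =
      (-1) ^ #(B ∩ A) * (-1) ^ #{i ∈ B | s i = true} := by
  have flip_sign (i : ι) : (if flipSet A s i = true then (-1 : R) else 1) =
      (if i ∈ A then -1 else 1) * (if s i = true then -1 else 1) := by
    by_cases hA : i ∈ A <;> cases hs : s i <;> simp [flipSet, hA, hs]
  simp only [neg_one_pow_card_filter, flip_sign, prod_mul_distrib, prod_ite_mem, prod_const]

lemma XOp_comp_ZOp_comm_of_even_card_inter [Fintype ι] {A B : Finset ι} (h : Even #(A ∩ B)) :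
    XOp A ∘ₗ ZOp B = ZOp B ∘ₗ XOp A := by
  ext g s
  change (-1 : ℂ) ^ #{i ∈ B | flipSet A s i = true} * g (flipSet A s) =
    (-1) ^ #{i ∈ B | s i = true} * g (flipSet A s)
  rw [neg_one_pow_card_filter_flipSet, inter_comm, h.neg_one_pow, one_mul]

end Pauli

namespace PCEdge

variable {n m : ℕ} {v : Fin n × Fin m} {f : Fin (n - 1) × Fin (m - 1)}

@[simp]
lemma horiz_mem_star {i : Fin (n - 1)} {j : Fin m} :
    horiz i j ∈ star v ↔ j = v.2 ∧ (i.val = v.1.val ∨ i.val + 1 = v.1.val) := by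
  rw [_root_.star, mem_filter]
  simp [inStar]

@[simp]
lemma vert_mem_star {i : Fin n} {j : Fin (m + 1)} :
    vert i j ∈ star v ↔ i = v.1 ∧ (j.val = v.2.val ∨ j.val = v.2.val + 1) := by
  rw [_root_.star, mem_filter]
  simp [inStar]

@[simp]
lemma horiz_mem_plaquette {i : Fin (n - 1)} {j : Fin m} :
    horiz i j ∈ plaquette f ↔ i.val = f.1.val ∧ (j.val = f.2.val ∨ j.val = f.2.val + 1) := by
  rw [plaquette, mem_filter]
  simp [inPlaquette]

@[simp]
lemma vert_mem_plaquette {i : Fin n} {j : Fin (m + 1)} :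
    vert i j ∈ plaquette f ↔ j.val = f.2.val + 1 ∧ (i.val = f.1.val ∨ i.val = f.1.val + 1) := by
  rw [plaquette, mem_filter]
  simp [inPlaquette]

end PCEdge

open PCEdge

def IsCornerOf {n m : ℕ} (v : Fin n × Fin m) (f : Fin (n - 1) × Fin (m - 1)) : Prop :=
  (v.1.val = f.1.val ∨ v.1.val = f.1.val + 1) ∧ (v.2.val = f.2.val ∨ v.2.val = f.2.val + 1)

section Overlap

variable {n m : ℕ} {v : Fin n × Fin m} {f : Fin (n - 1) × Fin (m - 1)}

lemma star_inter_plaquette_of_isCornerOf (h : IsCornerOf v f) :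
    star v ∩ plaquette f =
      {horiz f.1 v.2, vert v.1 ⟨f.2.val + 1, by have := f.2.isLt; omega⟩} := by
  obtain ⟨h1, h2⟩ := h
  ext e
  cases e <;> simp [Fin.ext_iff] <;> omega

lemma star_inter_plaquette_of_not_isCornerOf (h : ¬ IsCornerOf v f) :
    star v ∩ plaquette f = ∅ := by
  unfold IsCornerOf at h
  ext e
  cases e <;> simp [Fin.ext_iff] <;> omega

end Overlap

theorem star_plaquette_even_overlap_general (n m : ℕ)
    (v : Fin n × Fin m) (f : Fin (n - 1) × Fin (m - 1)) :
    ((star v ∩ plaquette f).card = 0 ∨ (star v ∩ plaquette f).card = 2) ∧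
      XOp (star v) ∘ₗ ZOp (plaquette f) = ZOp (plaquette f) ∘ₗ XOp (star v) := by
  have h_card : #(star v ∩ plaquette f) = 0 ∨ #(star v ∩ plaquette f) = 2 := by
    by_cases h : IsCornerOf v f
    · right
      rw [star_inter_plaquette_of_isCornerOf h, card_pair (by simp)]
    · left
      rw [star_inter_plaquette_of_not_isCornerOf h, card_empty]
  refine ⟨h_card, XOp_comp_ZOp_comm_of_even_card_inter ?_⟩
  rcases h_card with h | h <;> rw [h] <;> decide

/-- **Stars and plaquettes of the planar code overlap evenly.**
In the planar code lattice of arbitrary size, every star and every plaquette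
share `0` or `2` edges; consequently every star operator `X_{s(v)}` commutes
with every plaquette operator `Z_{p(f)}`. -/
theorem star_plaquette_even_overlap (n m : ℕ) (hn : 1 ≤ n) (hm : 1 ≤ m)
    (v : Fin n × Fin m) (f : Fin (n - 1) × Fin (m - 1)) :
    ((star v ∩ plaquette f).card = 0 ∨ (star v ∩ plaquette f).card = 2) ∧
      XOp (star v) ∘ₗ ZOp (plaquette f) = ZOp (plaquette f) ∘ₗ XOp (star v) :=
  star_plaquette_even_overlap_general n m v f

end
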